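/- arXiv:0807.4169 — 2 statements merged into one kernel-verified Lean document; each statement's English description precedes it below -/
import Mathlib

section
/- Let k ≥ 1. The map μ ↦ χ_μ is a group isomorphism from (G_k, ⊠) onto the group X(Y^(k)) of characters of Y^(k), endowed with the convolution product. -/
open scoped TensorProduct

noncomputable section

namespace FreeProb

attribute [local instance] Classical.propDecidable

/-! ### Non-crossing partitions of `{1,…,n}`, modelled as setoids on `Fin n` -/

/-- The partition `0_n` of `Fin n` into singletons. -/
def botS (n : ℕ) : Setoid (Fin n) := ⟨Eq, eq_equivalence⟩

/-- The partition `1_n` of `Fin n` with a single block. -/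
def topS (n : ℕ) : Setoid (Fin n) :=
  ⟨fun _ _ => True, ⟨fun _ => trivial, fun _ => trivial, fun _ _ => trivial⟩⟩

/-- A partition is non-crossing if there is no crossing `a < b < c < d` with
`a ∼ c`, `b ∼ d` lying in different blocks. -/
def IsNC {n : ℕ} (s : Setoid (Fin n)) : Prop :=
  ∀ a b c d : Fin n, a < b → b < c → c < d → s.r a c → s.r b d → s.r a b

/-- The lattice `NC(n)` of non-crossing partitions, ordered by reversed refinement
(the order inherited from the lattice of setoids). -/
abbrev NC (n : ℕ) := {s : Setoid (Fin n) // IsNC s}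

instance (n : ℕ) : Finite (Setoid (Fin n)) :=
  Finite.of_injective (fun s => s.r) (by intro s t h; cases s; cases t; cases h; rfl)

noncomputable instance (n : ℕ) : Fintype (Setoid (Fin n)) := Fintype.ofFinite _

noncomputable instance (n : ℕ) : Fintype (NC n) := Fintype.ofFinite _

/-- `0_n` as a non-crossing partition. -/
def ncBot (n : ℕ) : NC n :=
  ⟨botS n, by
    intro a b c d h1 h2 h3 hac _
    have hac' : a = c := hac
    subst hac'
    exact absurd (h1.trans h2) (lt_irrefl _)⟩

/-- `1_n` as a non-crossing partition. -/
def ncTop (n : ℕ) : NC n := ⟨topS n, fun _ _ _ _ _ _ _ _ _ => trivial⟩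

/-- The blocks of a partition, as a finset of finsets. -/
def blocks {n : ℕ} (s : Setoid (Fin n)) : Finset (Finset (Fin n)) :=
  Finset.univ.image fun a => Finset.univ.filter fun b => s.r a b

/-- The next element of the block of `b`, in increasing cyclic order. -/
def nextFun {n : ℕ} (s : Setoid (Fin n)) (b : Fin n) : Fin n :=
  let B : Finset (Fin n) := Finset.univ.filter fun a => s.r b a
  let A : Finset (Fin n) := B.filter fun a => b < a
  if h : A.Nonempty then A.min' h
  else B.min' ⟨b, Finset.mem_filter.mpr ⟨Finset.mem_univ b, s.iseqv.refl b⟩⟩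

/-- The permutation `P_π` associated to a partition `π`: its cycles are the blocks
of `π`, traversed in increasing order.  (The function `nextFun` is indeed bijective,
so the `dite` below always takes its first branch.) -/
def permOf {n : ℕ} (s : Setoid (Fin n)) : Equiv.Perm (Fin n) :=
  if h : Function.Bijective (nextFun s) then Equiv.ofBijective _ h else 1

/-- The partition of `Fin n` into the cycles (orbits) of a permutation. -/
def cycleSetoid {n : ℕ} (σ : Equiv.Perm (Fin n)) : Setoid (Fin n) :=
  ⟨σ.SameCycle, ⟨fun x => Equiv.Perm.SameCycle.refl σ x, fun h => h.symm, fun h h' => h.trans h'⟩⟩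

/-- The Kreweras complement `K(π)`, determined by `P_{K(π)} = P_π⁻¹ * P_{1_n}`. -/
def kreweras {n : ℕ} (s : Setoid (Fin n)) : Setoid (Fin n) :=
  cycleSetoid ((permOf s)⁻¹ * permOf (topS n))

/-- The relative Kreweras complement `K_t(s)`, determined by `P_{K_t(s)} = P_s⁻¹ * P_t`. -/
def relKreweras {n : ℕ} (s t : Setoid (Fin n)) : Setoid (Fin n) :=
  cycleSetoid ((permOf s)⁻¹ * permOf t)

/-! ### Words, and the Hopf algebra `Y^(k)` -/

/-- Words over the alphabet `{1,…,k}`, encoded as pairs `⟨n, w⟩` with `w : Fin n → Fin k`. -/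
abbrev WordIdx (k : ℕ) := Σ n : ℕ, Fin n → Fin k

/-- The commutative polynomial algebra `Y^(k) = ℂ[Y_w : |w| ≥ 2]`. -/
abbrev Yalg (k : ℕ) := MvPolynomial {p : WordIdx k // 2 ≤ p.1} ℂ

/-- The generator `Y_w`, with the convention `Y_w = 1` for `|w| ≤ 1`. -/
def Ygen {k : ℕ} (p : WordIdx k) : Yalg k :=
  if h : 2 ≤ p.1 then MvPolynomial.X ⟨p, h⟩ else 1

/-- The subword `w|B` of `w` on the positions in `B` (in increasing order). -/
def subword {k n : ℕ} (w : Fin n → Fin k) (B : Finset (Fin n)) : Fin B.card → Fin k :=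
  fun i => w (B.orderIsoOfFin rfl i).1

/-- The element `Y_{w;π} = ∏_{B block of π} Y_{w|B}`. -/
def Yprod {k n : ℕ} (w : Fin n → Fin k) (s : Setoid (Fin n)) : Yalg k :=
  ∏ B ∈ blocks s, Ygen ⟨B.card, subword w B⟩

/-- The comultiplication of `Y^(k)`:
`Δ(Y_w) = ∑_{π ∈ NC(n)} Y_{w;π} ⊗ Y_{w;K(π)}`. -/
def Δk (k : ℕ) : Yalg k →ₐ[ℂ] Yalg k ⊗[ℂ] Yalg k :=
  MvPolynomial.aeval fun q : {p : WordIdx k // 2 ≤ p.1} =>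
    ∑ π : NC q.1.1, Yprod q.1.2 π.1 ⊗ₜ[ℂ] Yprod q.1.2 (kreweras π.1)

/-- The counit of `Y^(k)`: `ε(Y_w) = 0` for `|w| ≥ 2`. -/
def εk (k : ℕ) : Yalg k →ₐ[ℂ] ℂ := MvPolynomial.aeval fun _ => 0

/-- The grading of `Y^(k)` in which `Y_w` is homogeneous of degree `|w| - 1`. -/
def Ycomp (k n : ℕ) : Submodule ℂ (Yalg k) :=
  MvPolynomial.weightedHomogeneousSubmodule ℂ (fun q : {p : WordIdx k // 2 ≤ p.1} => q.1.1 - 1) n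

/-! ### Convolution of linear functionals on a bialgebra -/

variable {A : Type} [CommRing A] [Algebra ℂ A]

/-- Convolution `ξη := mult ∘ (ξ ⊗ η) ∘ Δ` of two linear functionals. -/
def convF (D : A →ₐ[ℂ] A ⊗[ℂ] A) (ξ η : A →ₗ[ℂ] ℂ) : A →ₗ[ℂ] ℂ :=
  LinearMap.mul' ℂ ℂ ∘ₗ TensorProduct.map ξ η ∘ₗ D.toLinearMap

/-- Convolution powers `ξ^m`, with `ξ^0 := e` (the counit). -/
def convPowF (D : A →ₐ[ℂ] A ⊗[ℂ] A) (e ξ : A →ₗ[ℂ] ℂ) : ℕ → (A →ₗ[ℂ] ℂ)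
  | 0 => e
  | m + 1 => convF D (convPowF D e ξ m) ξ

/-- `(log η)(x) = -∑_{ℓ ≥ 1} (1/ℓ) (e - η)^ℓ (x)`, the logarithm of a functional `η`
with respect to convolution (`e` is the counit).  On each `x` the sum has only finitely
many nonzero terms, so the `tsum` below is the honest value. -/
def logFunF (D : A →ₐ[ℂ] A ⊗[ℂ] A) (e η : A →ₗ[ℂ] ℂ) (x : A) : ℂ :=
  -∑' ℓ : ℕ, (1 / ((ℓ : ℂ) + 1)) * convPowF D e (e - η) (ℓ + 1) x

/-! ### Distributions, R-transforms, free multiplicative convolution -/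

/-- A distribution (or a family of coefficients of a power series in `k` non-commuting
indeterminates), encoded by its values on all words. -/
abbrev Dist (k : ℕ) := WordIdx k → ℂ

/-- `μ ∈ G_k`: `μ(1) = 1` and `μ(X_i) = 1` for all `i`. -/
def InG {k : ℕ} (μ : Dist k) : Prop :=
  (∀ w : Fin 0 → Fin k, μ ⟨0, w⟩ = 1) ∧ (∀ w : Fin 1 → Fin k, μ ⟨1, w⟩ = 1)

/-- `Cf_{w;π}(f) = ∏_{B block of π} Cf_{w|B}(f)`, for a coefficient family `α`. -/
def cfPart {k n : ℕ} (α : Dist k) (w : Fin n → Fin k) (s : Setoid (Fin n)) : ℂ :=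
  ∏ B ∈ blocks s, α ⟨B.card, subword w B⟩

/-- `α` is (the coefficient family of) the R-transform of `μ`:
the moment–cumulant relations hold. -/
def IsRTransform {k : ℕ} (μ α : Dist k) : Prop :=
  (∀ w : Fin 0 → Fin k, α ⟨0, w⟩ = 0) ∧
  ∀ (n : ℕ) (w : Fin n → Fin k), 1 ≤ n → μ ⟨n, w⟩ = ∑ π : NC n, cfPart α w π.1

/-- `γ` is the R-transform of the free multiplicative convolution of distributions
with R-transforms `α` and `β`:
`Cf_w(R_{μ⊠ν}) = ∑_{π ∈ NC(n)} Cf_{w;π}(R_μ) Cf_{w;K(π)}(R_ν)`. -/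
def IsBoxtimes {k : ℕ} (α β γ : Dist k) : Prop :=
  ∀ (n : ℕ) (w : Fin n → Fin k), 1 ≤ n →
    γ ⟨n, w⟩ = ∑ π : NC n, cfPart α w π.1 * cfPart β w (kreweras π.1)

/-- The unit `μ_o` of `(G_k, ⊠)`: all moments equal to `1`. -/
def distUnit (k : ℕ) : Dist k := fun _ => 1

/-- The character `χ_μ` of `Y^(k)` associated to a distribution with R-transform `α`:
`χ_μ(Y_w) = Cf_w(R_μ)`. -/
def charOf {k : ℕ} (α : Dist k) : Yalg k →ₐ[ℂ] ℂ :=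
  MvPolynomial.aeval fun q => α q.1

/-- The generalized coefficient `Cf_w^(Γ)(f) = ∏_{j=1}^{ℓ} Cf_{w;K_{π_j}(π_{j-1})}(f)`
attached to a (multi-)chain `Γ = (π_0,…,π_{m+1})` in `NC(n)`. -/
def cfChain {k n : ℕ} (α : Dist k) (w : Fin n → Fin k) (m : ℕ)
    (c : Fin (m + 2) → Setoid (Fin n)) : ℂ :=
  ∏ j : Fin (m + 1), cfPart α w (relKreweras (c j.castSucc) (c j.succ))

/-- The `i`-th marginal coefficients: the free cumulants of the `i`-th marginal `μ_i`
are `Cf_{(i,…,i)}(R_μ)`. -/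
def margFam {k : ℕ} (α : Dist k) (i : Fin k) : Dist 1 := fun q => α ⟨q.1, fun _ => i⟩


/-! ### Iterated comultiplication -/

/-- The iterated tensor powers `Y^(k) ⊗ ⋯ ⊗ Y^(k)` (`m+1` factors), as objects of
`ModuleCat ℂ` so that the recursion carries its module structure. -/
def YpowM (k : ℕ) : ℕ → ModuleCat ℂ
  | 0 => ModuleCat.of ℂ (Yalg k)
  | m + 1 => ModuleCat.of ℂ (Yalg k ⊗[ℂ] YpowM k m)

/-- The iterated comultiplication: `Δiter k m = Δ^{m+1}` in the notation of the paper
(`Δiter k 0 = id`, `Δiter k (m+1) = (id ⊗ Δ^{m+1}) ∘ Δ`). -/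
def Δiter (k : ℕ) : ∀ m : ℕ, Yalg k →ₗ[ℂ] YpowM k m
  | 0 => LinearMap.id
  | m + 1 => TensorProduct.map LinearMap.id (Δiter k m) ∘ₗ (Δk k).toLinearMap

/-- The pure tensor `Y_{w;K_{π_1}(π_0)} ⊗ ⋯ ⊗ Y_{w;K_{π_{m+1}}(π_m)}` attached to a
multi-chain `(π_0, …, π_{m+1})`. -/
def chainTensor {k n : ℕ} (w : Fin n → Fin k) :
    ∀ m : ℕ, (Fin (m + 2) → Setoid (Fin n)) → YpowM k m
  | 0, c => Yprod w (relKreweras (c 0) (c 1))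
  | m + 1, c => Yprod w (relKreweras (c 0) (c 1)) ⊗ₜ[ℂ] chainTensor w m (fun i => c i.succ)


/-! ### One-variable power series tools -/

/-- The R-transform of a one-variable distribution, as a power series. -/
def Rser (α : Dist 1) : PowerSeries ℂ :=
  PowerSeries.mk fun m => if m = 0 then 0 else α ⟨m, fun _ => 0⟩

/-- Composition `f ∘ g` of formal power series (the honest composition whenever
`g` has vanishing constant term). -/
def psComp (f g : PowerSeries ℂ) : PowerSeries ℂ :=
  PowerSeries.mk fun m =>
    ∑ j ∈ Finset.range (m + 1), PowerSeries.coeff (R := ℂ) j f * PowerSeries.coeff (R := ℂ) m (g ^ j)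

/-- `S` is the S-transform of the distribution with R-transform `α`:
`S(z) = (1/z)·R^{⟨-1⟩}(z)`, i.e. `z·S(z)` is the compositional inverse of `R`. -/
def SChar (α : Dist 1) (S : PowerSeries ℂ) : Prop :=
  PowerSeries.constantCoeff (R := ℂ) S = 1 ∧
  psComp (Rser α) (PowerSeries.X * S) = PowerSeries.X ∧
  psComp (PowerSeries.X * S) (Rser α) = PowerSeries.X

/-- The formal logarithm `log f = -∑_{ℓ≥1} (1/ℓ)(1-f)^ℓ = ∑_{ℓ≥1} ((-1)^{ℓ+1}/ℓ)(f-1)^ℓ`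
of a power series (the honest logarithm whenever `f` has constant term 1). -/
def psLog {B : Type} [CommRing B] [Algebra ℂ B] (f : PowerSeries B) : PowerSeries B :=
  PowerSeries.mk fun m =>
    ∑ ℓ ∈ Finset.range (m + 1), ((-1 : ℂ) ^ (ℓ + 1) / ℓ) • PowerSeries.coeff (R := B) m ((f - 1) ^ ℓ)

/-- The coefficient-wise LS-transform of a one-variable distribution, as a power series. -/
def LSseries (α : Dist 1) : PowerSeries ℂ :=
  PowerSeries.mk fun n =>
    if 2 ≤ n then
      logFunF (Δk 1) (εk 1).toLinearMap (charOf α).toLinearMap (Ygen ⟨n, fun _ => 0⟩)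
    else 0

/-! ### The Hopf algebra `Sym` of symmetric functions -/

/-- `Sym`, realized as the free commutative algebra on the complete homogeneous
symmetric functions `h_1, h_2, …`. -/
abbrev SymA := MvPolynomial {m : ℕ // 1 ≤ m} ℂ

/-- The complete homogeneous symmetric function `h_m` (with `h_0 = 1`). -/
def Hgen (m : ℕ) : SymA := if h : 1 ≤ m then MvPolynomial.X ⟨m, h⟩ else 1

/-- The comultiplication of `Sym`: `Δ(h_n) = ∑_{i=0}^n h_i ⊗ h_{n-i}`. -/
def ΔSym : SymA →ₐ[ℂ] SymA ⊗[ℂ] SymA :=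
  MvPolynomial.aeval fun q : {m : ℕ // 1 ≤ m} =>
    ∑ i ∈ Finset.range (q.1 + 1), Hgen i ⊗ₜ[ℂ] Hgen (q.1 - i)

/-- The counit of `Sym`. -/
def εSym : SymA →ₐ[ℂ] ℂ := MvPolynomial.aeval fun _ => 0

/-- The generating series `h(z) = 1 + ∑ (-1)^n h_n z^n`. -/
def hSymSeries : PowerSeries SymA :=
  PowerSeries.mk fun m => if m = 0 then 1 else (-1 : SymA) ^ m * Hgen m

/-- The generating series `e(z) = 1 + ∑ e_n z^n = 1/h(z)`. -/
def eSymSeries : PowerSeries SymA := PowerSeries.invOfUnit hSymSeries 1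

/-- The elementary symmetric function `e_m`, defined through `e(z) = 1/h(z)`. -/
def eSym (m : ℕ) : SymA := PowerSeries.coeff (R := SymA) m eSymSeries

/-- The power sum symmetric function `p_m`, defined through
`log e(z) = ∑_{m≥1} ((-1)^{m+1}/m) p_m z^m`. -/
def pSym (m : ℕ) : SymA :=
  ((-1 : ℂ) ^ (m + 1) * m) • PowerSeries.coeff (R := SymA) m (psLog eSymSeries)

/-- The grading of `Sym` (`h_n` homogeneous of degree `n`). -/
def SymComp (n : ℕ) : Submodule ℂ SymA :=
  MvPolynomial.weightedHomogeneousSubmodule ℂ (fun q : {m : ℕ // 1 ≤ m} => q.1) n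

/-- The symmetric function `y_n = ∑_{π ∈ NC(n-1)} ∏_{B block of π} e_{|B|}`. -/
def ySym (n : ℕ) : SymA := ∑ π : NC (n - 1), ∏ B ∈ blocks π.1, eSym B.card

/-- The homomorphism `Φ : Y^(1) → Sym`, `Φ(Y_n) = y_n`. -/
def Phi : Yalg 1 →ₐ[ℂ] SymA := MvPolynomial.aeval fun q => ySym q.1.1

/-- The character `θ_μ` of `Sym` attached to a distribution with S-transform `S`:
`θ_μ(h_n) = (-1)^n β_n` where `S(z) = 1 + ∑ β_n z^n`. -/
def thetaOf (S : PowerSeries ℂ) : SymA →ₐ[ℂ] ℂ :=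
  MvPolynomial.aeval fun q : {m : ℕ // 1 ≤ m} =>
    (-1 : ℂ) ^ q.1 * PowerSeries.coeff (R := ℂ) q.1 S

/-- Infinitesimal characters of `Sym`. -/
def IsInfCharSym (ξ : SymA →ₗ[ℂ] ℂ) : Prop :=
  ∀ u v : SymA, ξ (u * v) = ξ u * εSym v + εSym u * ξ v

/-! A distribution in `G_k` is determined by its R-transform through the moment–cumulant
relations, and the R-transform by the values of `χ_μ` on the free generators `Y_w`, its
coefficients of length at most one being forced to be `0` and `1`; conversely, any values on
the generators define an R-transform.  For multiplicativity, `χ_{μ⊠ν}` and `χ_μ χ_ν` are both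
characters, so it suffices to compare them on generators, where the formula defining `⊠` is
the formula defining `Δ(Y_w)`. -/

instance {α : Type*} [Subsingleton α] : Subsingleton (Setoid α) :=
  ⟨fun s t => Setoid.ext fun a b => by
    obtain rfl := Subsingleton.elim a b
    exact iff_of_true (s.refl a) (t.refl a)⟩

theorem blocks_fin_one (s : Setoid (Fin 1)) : blocks s = {Finset.univ} := by
  simp [blocks, Subsingleton.elim _ (0 : Fin 1)]

theorem cfPart_fin_one {k : ℕ} (α : Dist k) (w : Fin 1 → Fin k) (s : Setoid (Fin 1)) :
    cfPart α w s = α ⟨1, w⟩ := by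
  rw [cfPart, blocks_fin_one, Finset.prod_singleton]
  exact congrArg α <|
    Sigma.ext rfl ((Fin.heq_fun_iff rfl).2 fun _ => congrArg w (Subsingleton.elim _ _))

theorem card_pos_of_mem_blocks {n : ℕ} {s : Setoid (Fin n)} {B : Finset (Fin n)}
    (hB : B ∈ blocks s) : 0 < B.card := by
  obtain ⟨a, -, rfl⟩ := Finset.mem_image.mp hB
  exact Finset.card_pos.mpr ⟨a, Finset.mem_filter.mpr ⟨Finset.mem_univ a, s.refl a⟩⟩

namespace IsRTransform

variable {k : ℕ} {μ ν α β : Dist k}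

theorem apply_length_one (hμ : InG μ) (hα : IsRTransform μ α) (w : Fin 1 → Fin k) :
    α ⟨1, w⟩ = 1 := by
  have := hα.2 1 w le_rfl
  rwa [hμ.2 w, Fintype.sum_subsingleton _ (ncBot 1), cfPart_fin_one, eq_comm] at this

theorem apply_of_length_eq_one (hμ : InG μ) (hα : IsRTransform μ α) {p : WordIdx k}
    (hp : p.1 = 1) : α p = 1 := by
  obtain ⟨n, w⟩ := p
  obtain rfl : n = 1 := hp
  exact hα.apply_length_one hμ w

theorem charOf_Yprod (hμ : InG μ) (hα : IsRTransform μ α) {n : ℕ} (w : Fin n → Fin k)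
    (s : Setoid (Fin n)) : charOf α (Yprod w s) = cfPart α w s := by
  rw [Yprod, cfPart, map_prod]
  refine Finset.prod_congr rfl fun B hB => ?_
  rw [Ygen]
  split_ifs with h
  · exact MvPolynomial.aeval_X _ _
  · have hB1 : B.card = 1 := by
      have := card_pos_of_mem_blocks hB
      change ¬2 ≤ B.card at h
      omega
    rw [map_one, hα.apply_of_length_eq_one hμ hB1]

theorem eq_of_charOf_eq (hμ : InG μ) (hν : InG ν) (hα : IsRTransform μ α)
    (hβ : IsRTransform ν β) (h : charOf α = charOf β) : α = β := by
  funext p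
  obtain ⟨_ | _ | n, w⟩ := p
  · rw [hα.1 w, hβ.1 w]
  · rw [hα.apply_length_one hμ w, hβ.apply_length_one hν w]
  · simpa [charOf] using congrArg (· (MvPolynomial.X ⟨⟨n + 2, w⟩, Nat.le_add_left 2 n⟩)) h

theorem dist_eq (hμ : InG μ) (hν : InG ν) (hα : IsRTransform μ α)
    (hα' : IsRTransform ν α) : μ = ν := by
  funext p
  obtain ⟨_ | n, w⟩ := p
  · rw [hμ.1 w, hν.1 w]
  · rw [hα.2 (n + 1) w n.succ_pos, hα'.2 (n + 1) w n.succ_pos]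

end IsRTransform

def rTransformOfChar {k : ℕ} (η : Yalg k →ₐ[ℂ] ℂ) : Dist k :=
  fun p => if h : 2 ≤ p.1 then η (MvPolynomial.X ⟨p, h⟩) else if p.1 = 1 then 1 else 0

def distOfChar {k : ℕ} (η : Yalg k →ₐ[ℂ] ℂ) : Dist k :=
  fun p => if 1 ≤ p.1 then ∑ π : NC p.1, cfPart (rTransformOfChar η) p.2 π.1 else 1

theorem inG_distOfChar {k : ℕ} (η : Yalg k →ₐ[ℂ] ℂ) : InG (distOfChar η) := by
  refine ⟨fun w => if_neg (Nat.not_succ_le_zero 0), fun w => ?_⟩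
  simp [distOfChar, Fintype.sum_subsingleton _ (ncBot 1), cfPart_fin_one, rTransformOfChar]

theorem isRTransform_distOfChar {k : ℕ} (η : Yalg k →ₐ[ℂ] ℂ) :
    IsRTransform (distOfChar η) (rTransformOfChar η) :=
  ⟨fun w => by simp [rTransformOfChar], fun _ _ hn => if_pos hn⟩

theorem charOf_rTransformOfChar {k : ℕ} (η : Yalg k →ₐ[ℂ] ℂ) :
    charOf (rTransformOfChar η) = η :=
  MvPolynomial.algHom_ext fun q => by simp [charOf, rTransformOfChar, q.2]

theorem convF_algHom (D : A →ₐ[ℂ] A ⊗[ℂ] A) (f g : A →ₐ[ℂ] ℂ) :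
    convF D f.toLinearMap g.toLinearMap =
      ((Algebra.TensorProduct.lmul' ℂ).comp ((Algebra.TensorProduct.map f g).comp D)).toLinearMap :=
  rfl

theorem IsBoxtimes.charOf_eq {k : ℕ} {μ ν α β γ : Dist k} (hμ : InG μ) (hν : InG ν)
    (hα : IsRTransform μ α) (hβ : IsRTransform ν β) (hγ : IsBoxtimes α β γ) :
    charOf γ = (Algebra.TensorProduct.lmul' ℂ).comp
      ((Algebra.TensorProduct.map (charOf α) (charOf β)).comp (Δk k)) := by
  refine MvPolynomial.algHom_ext fun q => ?_
  have hΔ : Δk k (MvPolynomial.X q) =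
      ∑ π : NC q.1.1, Yprod q.1.2 π.1 ⊗ₜ[ℂ] Yprod q.1.2 (kreweras π.1) :=
    MvPolynomial.aeval_X _ q
  simp only [AlgHom.comp_apply, hΔ, map_sum, Algebra.TensorProduct.map_tmul,
    Algebra.TensorProduct.lmul'_apply_tmul, hα.charOf_Yprod hμ, hβ.charOf_Yprod hν]
  exact (MvPolynomial.aeval_X _ q).trans (hγ q.1.1 q.1.2 (one_le_two.trans q.2))

theorem char_map_group_iso_general (k : ℕ) :
    -- injectivity of `μ ↦ χ_μ` on `G_k`
    (∀ μ ν α β : Dist k, InG μ → InG ν → IsRTransform μ α → IsRTransform ν β →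
      charOf α = charOf β → μ = ν) ∧
    -- surjectivity onto the set of characters of `Y^(k)`
    (∀ η : Yalg k →ₐ[ℂ] ℂ, ∃ μ α : Dist k, InG μ ∧ IsRTransform μ α ∧ charOf α = η) ∧
    -- homomorphism property: `χ_{μ ⊠ ν} = χ_μ · χ_ν` (convolution)
    (∀ μ ν α β γ : Dist k, InG μ → InG ν → IsRTransform μ α → IsRTransform ν β →
      IsBoxtimes α β γ →
      (charOf γ).toLinearMap =
        convF (Δk k) (charOf α).toLinearMap (charOf β).toLinearMap) := by
  refine ⟨fun μ ν α β hμ hν hα hβ h => ?_, fun η => ?_, fun μ ν α β γ hμ hν hα hβ hγ => ?_⟩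
  · obtain rfl := hα.eq_of_charOf_eq hμ hν hβ h
    exact hα.dist_eq hμ hν hβ
  · exact ⟨distOfChar η, rTransformOfChar η, inG_distOfChar η, isRTransform_distOfChar η,
      charOf_rTransformOfChar η⟩
  · rw [convF_algHom, hγ.charOf_eq hμ hν hα hβ]

/-- Theorem 1.2 / Proposition 3.7.  The map `μ ↦ χ_μ` is a group
isomorphism from `(G_k, ⊠)` onto the group of characters of `Y^(k)` with convolution:
it is injective, surjective onto the characters, and it transforms `⊠` into
convolution. -/
theorem char_map_group_iso (k : ℕ) (hk : 1 ≤ k) :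
    -- injectivity of `μ ↦ χ_μ` on `G_k`
    (∀ μ ν α β : Dist k, InG μ → InG ν → IsRTransform μ α → IsRTransform ν β →
      charOf α = charOf β → μ = ν) ∧
    -- surjectivity onto the set of characters of `Y^(k)`
    (∀ η : Yalg k →ₐ[ℂ] ℂ, ∃ μ α : Dist k, InG μ ∧ IsRTransform μ α ∧ charOf α = η) ∧
    -- homomorphism property: `χ_{μ ⊠ ν} = χ_μ · χ_ν` (convolution)
    (∀ μ ν α β γ : Dist k, InG μ → InG ν → IsRTransform μ α → IsRTransform ν β →
      IsBoxtimes α β γ →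
      (charOf γ).toLinearMap =
        convF (Δk k) (charOf α).toLinearMap (charOf β).toLinearMap) :=
  char_map_group_iso_general k

end FreeProb

end
end

section
/- Let k ≥ 1, μ ∈ G_k, w ∈ [k]* with |w| = n ≥ 2, and ℓ ≥ 1. If ℓ < n, then the ℓ-th convolution power (χ_μ − ε)^ℓ evaluated at Y_w equals Σ over all chains Γ in NC(n) with |Γ| = ℓ of Cf_w^(Γ)(R_μ). If ℓ ≥ n, then (χ_μ − ε)^ℓ(Y_w) = 0. -/
open scoped TensorProduct

noncomputable section

namespace FreeProb

attribute [local instance] Classical.propDecidable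

/-! ### Convolution of linear functionals on a bialgebra -/

variable {A : Type} [CommRing A] [Algebra ℂ A]

/-!
A partition `σ ≤ ρ` in `NC(n)` is the same as a choice of a non-crossing partition of each block
of `ρ`, and `P_σ⁻¹ P_ρ` acts on each block `B` as `P_{σ|B}⁻¹ P_{1_B}`; hence `K_ρ(σ)` is computed
block by block, and multiplicativity of `Δ` gives
`Δ(Y_{w;ρ}) = ∑_{σ ≤ ρ} Y_{w;σ} ⊗ Y_{w;K_ρ(σ)}`, where `Y_{w;ρ} = ∏_{B ∈ ρ} Y_{w|B}`.
Since `μ(X_i) = 1` forces `Cf_{(i)}(R_μ) = 1`, the functional `χ_μ - ε` sends `Y_{w;π}` to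
`Cf_{w;π}(R_μ)` for `π ≠ 0_n` and to `0` for `π = 0_n`, and `K_ρ(σ) = 0_n` only for `σ = ρ`.
Induction on `ℓ` then expresses `(χ_μ - ε)^ℓ(Y_{w;ρ})` as the sum of `Cf_w^(Γ)(R_μ)` over the chains
`Γ` of length `ℓ` from `0_n` to `ρ`; take `ρ = 1_n`. Along a chain the number of blocks drops
strictly, from `n` at `0_n` to `1` at `1_n`, so there is no chain of length `ℓ ≥ n`.
-/
section Blocks

variable {n : ℕ} {s : Setoid (Fin n)} {B B' : Finset (Fin n)} {x y : Fin n}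

def blockOf (s : Setoid (Fin n)) (x : Fin n) : Finset (Fin n) :=
  Finset.univ.filter fun a => s x a

@[simp] lemma mem_blockOf : y ∈ blockOf s x ↔ s x y := by
  simp [blockOf]

lemma mem_blockOf_self (s : Setoid (Fin n)) (x : Fin n) : x ∈ blockOf s x :=
  mem_blockOf.mpr (s.refl' x)

lemma blockOf_mem_blocks (s : Setoid (Fin n)) (x : Fin n) : blockOf s x ∈ blocks s :=
  Finset.mem_image_of_mem _ (Finset.mem_univ x)

lemma mem_blocks : B ∈ blocks s ↔ ∃ x, blockOf s x = B := by
  simp [blocks, blockOf]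

lemma blockOf_eq_of_rel (h : s x y) : blockOf s x = blockOf s y := by
  ext z
  simp only [mem_blockOf]
  exact ⟨s.trans' (s.symm' h), s.trans' h⟩

lemma eq_blockOf_of_mem (hB : B ∈ blocks s) (hx : x ∈ B) : B = blockOf s x := by
  obtain ⟨a, rfl⟩ := mem_blocks.mp hB
  exact blockOf_eq_of_rel (mem_blockOf.mp hx)

lemma eq_of_mem_blocks (hB : B ∈ blocks s) (hB' : B' ∈ blocks s) (hx : x ∈ B) (hx' : x ∈ B') :
    B = B' :=
  (eq_blockOf_of_mem hB hx).trans (eq_blockOf_of_mem hB' hx').symm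

lemma rel_of_mem_blocks (hB : B ∈ blocks s) (hx : x ∈ B) (hy : y ∈ B) : s x y := by
  rw [eq_blockOf_of_mem hB hx] at hy
  exact mem_blockOf.mp hy

lemma mem_of_mem_blocks_of_rel (hB : B ∈ blocks s) (hx : x ∈ B) (h : s x y) : y ∈ B := by
  rw [eq_blockOf_of_mem hB hx]
  exact mem_blockOf.mpr h

lemma nonempty_of_mem_blocks (hB : B ∈ blocks s) : B.Nonempty := by
  obtain ⟨a, rfl⟩ := mem_blocks.mp hB
  exact ⟨a, mem_blockOf_self s a⟩

end Blocks

section PermOf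

variable {n : ℕ} {s : Setoid (Fin n)} {a b : Fin n}

lemma nextFun_eq (s : Setoid (Fin n)) (b : Fin n) :
    nextFun s b =
      if h : ((blockOf s b).filter (b < ·)).Nonempty then ((blockOf s b).filter (b < ·)).min' h
      else (blockOf s b).min' ⟨b, mem_blockOf_self s b⟩ :=
  rfl

lemma rel_nextFun (s : Setoid (Fin n)) (b : Fin n) : s b (nextFun s b) := by
  rw [nextFun_eq]
  split_ifs with h
  · exact mem_blockOf.mp (Finset.mem_filter.mp (Finset.min'_mem _ h)).1
  · exact mem_blockOf.mp (Finset.min'_mem _ _)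

lemma lt_nextFun_and_nextFun_le (h : s b a) (hlt : b < a) : b < nextFun s b ∧ nextFun s b ≤ a := by
  have hA : ((blockOf s b).filter (b < ·)).Nonempty := ⟨a, by simp [h, hlt]⟩
  rw [nextFun_eq, dif_pos hA]
  exact ⟨(Finset.mem_filter.mp (Finset.min'_mem _ hA)).2, Finset.min'_le _ _ (by simp [h, hlt])⟩

lemma lt_nextFun_or_nextFun_le (h : s b a) : b < nextFun s b ∨ nextFun s b ≤ a := by
  rw [nextFun_eq]
  split_ifs with hA
  · exact Or.inl (Finset.mem_filter.mp (Finset.min'_mem _ hA)).2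
  · exact Or.inr (Finset.min'_le _ _ (mem_blockOf.mpr h))

/-- Within a block, the first of two elements `a < b` is sent to a point in `(a, b]`, while
`b` is sent either beyond `b` or to the minimum of the block. -/
lemma nextFun_injective (s : Setoid (Fin n)) : Function.Injective (nextFun s) := by
  have key : ∀ a b, a < b → nextFun s a ≠ nextFun s b := by
    intro a b hab heq
    have hrel : s a b := s.trans' (rel_nextFun s a) (heq ▸ s.symm' (rel_nextFun s b))
    obtain ⟨ha, hab'⟩ := lt_nextFun_and_nextFun_le hrel hab
    rcases lt_nextFun_or_nextFun_le (s.symm' hrel) with hb | hb <;> rw [← heq] at hb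
    · exact absurd hab' (not_le.mpr hb)
    · exact absurd ha (not_lt.mpr hb)
  intro a b h
  by_contra hne
  rcases lt_or_gt_of_ne hne with hlt | hlt
  · exact key a b hlt h
  · exact key b a hlt h.symm

lemma permOf_apply (s : Setoid (Fin n)) (x : Fin n) : permOf s x = nextFun s x := by
  rw [permOf, dif_pos (Finite.injective_iff_bijective.mp (nextFun_injective s))]
  rfl

lemma nextFun_orderEmbedding {c : ℕ} {s' : Setoid (Fin c)} (e : Fin c ↪o Fin n) (i : Fin c)
    (he : blockOf s (e i) = (blockOf s' i).image e) :
    nextFun s (e i) = e (nextFun s' i) := by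
  have hfilter : (blockOf s (e i)).filter (e i < ·) = ((blockOf s' i).filter (i < ·)).image e := by
    rw [he, Finset.filter_image]
    simp only [OrderEmbedding.lt_iff_lt]
  rw [nextFun_eq, nextFun_eq, hfilter]
  by_cases hne : ((blockOf s' i).filter (i < ·)).Nonempty
  · rw [dif_pos (hne.image e), dif_pos hne, Finset.min'_image e.monotone]
  · rw [dif_neg (by rwa [Finset.image_nonempty]), dif_neg hne]
    simp only [he, Finset.min'_image e.monotone]

end PermOf

section Glue

variable {n : ℕ}

def enum (B : Finset (Fin n)) : Fin B.card ↪o Fin n := B.orderEmbOfFin rfl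

def indexIn (B : Finset (Fin n)) (x : Fin n) (hx : x ∈ B) : Fin B.card :=
  (B.orderIsoOfFin rfl).symm ⟨x, hx⟩

variable {B : Finset (Fin n)} {x y : Fin n}

lemma enum_mem (B : Finset (Fin n)) (i : Fin B.card) : enum B i ∈ B :=
  B.orderEmbOfFin_mem rfl i

@[simp] lemma enum_indexIn (hx : x ∈ B) : enum B (indexIn B x hx) = x := by
  rw [enum, ← Finset.coe_orderIsoOfFin_apply, indexIn, OrderIso.apply_symm_apply]

@[simp] lemma indexIn_enum (i : Fin B.card) : indexIn B (enum B i) (enum_mem B i) = i :=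
  (enum B).injective (enum_indexIn _)

lemma subword_apply {k : ℕ} (w : Fin n → Fin k) (B : Finset (Fin n)) (i : Fin B.card) :
    subword w B i = w (enum B i) := by
  rw [subword, Finset.coe_orderIsoOfFin_apply]
  rfl

lemma exists_enum_eq_of_mem (hx : x ∈ B) : ∃ i, enum B i = x := ⟨_, enum_indexIn hx⟩

def glue (t : Setoid (Fin n)) (g : ∀ B : blocks t, Setoid (Fin B.1.card)) : Setoid (Fin n) where
  r x y := t x y ∧ ∀ (B : blocks t) (hx : x ∈ B.1) (hy : y ∈ B.1),
    g B (indexIn B x hx) (indexIn B y hy)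
  iseqv := by
    refine ⟨fun x => ⟨t.refl' x, fun B _ _ => (g B).refl' _⟩, ?_, ?_⟩
    · rintro x y ⟨h, hg⟩
      exact ⟨t.symm' h, fun B hy hx => (g B).symm' (hg B hx hy)⟩
    · rintro x y z ⟨h, hg⟩ ⟨h', hg'⟩
      refine ⟨t.trans' h h', fun B hx hz => ?_⟩
      have hy : y ∈ B.1 := mem_of_mem_blocks_of_rel B.2 hx h
      exact (g B).trans' (hg B hx hy) (hg' B hy hz)

variable {t : Setoid (Fin n)} {g : ∀ B : blocks t, Setoid (Fin B.1.card)}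

lemma glue_rel_iff : glue t g x y ↔ t x y ∧ ∀ (B : blocks t) (hx : x ∈ B.1) (hy : y ∈ B.1),
    g B (indexIn B x hx) (indexIn B y hy) :=
  Iff.rfl

lemma exists_enum_eq (t : Setoid (Fin n)) (x : Fin n) :
    ∃ (B : blocks t) (i : Fin B.1.card), enum B.1 i = x :=
  ⟨⟨_, blockOf_mem_blocks t x⟩, exists_enum_eq_of_mem (mem_blockOf_self t x)⟩

lemma glue_le : glue t g ≤ t := fun _ _ h => (glue_rel_iff.mp h).1

lemma glue_rel_enum (B : blocks t) (i j : Fin B.1.card) :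
    glue t g (enum B.1 i) (enum B.1 j) ↔ g B i j := by
  rw [glue_rel_iff]
  constructor
  · rintro ⟨-, hg⟩
    have := hg B (enum_mem B.1 i) (enum_mem B.1 j)
    rwa [indexIn_enum, indexIn_enum] at this
  · intro h
    refine ⟨rel_of_mem_blocks B.2 (enum_mem B.1 i) (enum_mem B.1 j), fun B' hi hj => ?_⟩
    obtain rfl : B' = B := Subtype.ext (eq_of_mem_blocks B'.2 B.2 hi (enum_mem B.1 i))
    rwa [indexIn_enum, indexIn_enum]

lemma exists_enum_eq_of_glue_rel (B : blocks t) (i : Fin B.1.card) (h : glue t g (enum B.1 i) y) :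
    ∃ j, enum B.1 j = y :=
  exists_enum_eq_of_mem (mem_of_mem_blocks_of_rel B.2 (enum_mem B.1 i) (glue_le h))

lemma glue_congr {g' : ∀ B : blocks t, Setoid (Fin B.1.card)} (h : ∀ B, g B = g' B) :
    glue t g = glue t g' := by
  rw [funext h]

lemma glue_topS (t : Setoid (Fin n)) : glue t (fun B => topS B.1.card) = t :=
  Setoid.ext fun _ _ => ⟨fun h => h.1, fun h => ⟨h, fun _ _ _ => trivial⟩⟩

lemma comap_glue (B : blocks t) : (glue t g).comap (enum B.1) = g B :=
  Setoid.ext fun i j => glue_rel_enum B i j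

lemma glue_comap {s : Setoid (Fin n)} (h : s ≤ t) : glue t (fun B => s.comap (enum B.1)) = s := by
  ext x y
  constructor
  · rintro ⟨hxy, hg⟩
    have hx := mem_blockOf_self t x
    have hy : y ∈ blockOf t x := mem_blockOf.mpr hxy
    have := hg ⟨_, blockOf_mem_blocks t x⟩ hx hy
    rwa [Setoid.comap_rel, enum_indexIn, enum_indexIn] at this
  · intro hs
    refine ⟨h hs, fun B hx hy => ?_⟩
    rwa [Setoid.comap_rel, enum_indexIn, enum_indexIn]

lemma blockOf_glue (B : blocks t) (i : Fin B.1.card) :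
    blockOf (glue t g) (enum B.1 i) = (blockOf (g B) i).image (enum B.1) := by
  ext z
  simp only [mem_blockOf, Finset.mem_image]
  constructor
  · intro h
    obtain ⟨j, rfl⟩ := exists_enum_eq_of_glue_rel B i h
    exact ⟨j, (glue_rel_enum B i j).mp h, rfl⟩
  · rintro ⟨j, hj, rfl⟩
    exact (glue_rel_enum B i j).mpr hj

lemma IsNC.comap {s : Setoid (Fin n)} (hs : IsNC s) {c : ℕ} (e : Fin c ↪o Fin n) :
    IsNC (s.comap e) :=
  fun _ _ _ _ h₁ h₂ h₃ hac hbd =>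
    hs _ _ _ _ (e.lt_iff_lt.mpr h₁) (e.lt_iff_lt.mpr h₂) (e.lt_iff_lt.mpr h₃) hac hbd

lemma IsNC.glue (ht : IsNC t) (hg : ∀ B, IsNC (g B)) : IsNC (glue t g) := by
  intro a b c d h₁ h₂ h₃ hac hbd
  refine ⟨ht a b c d h₁ h₂ h₃ hac.1 hbd.1, fun B ha hb => ?_⟩
  have hc : c ∈ B.1 := mem_of_mem_blocks_of_rel B.2 ha hac.1
  have hd : d ∈ B.1 := mem_of_mem_blocks_of_rel B.2 hb hbd.1
  have lt_index : ∀ {x y} (hx : x ∈ B.1) (hy : y ∈ B.1), x < y → indexIn B x hx < indexIn B y hy :=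
    fun hx hy hxy => by rwa [← (enum B.1).lt_iff_lt, enum_indexIn, enum_indexIn]
  exact hg B _ _ _ _ (lt_index ha hb h₁) (lt_index hb hc h₂) (lt_index hc hd h₃)
    (hac.2 B ha hc) (hbd.2 B hb hd)

def glueEquiv (t : NC n) : (∀ B : blocks t.1, NC B.1.card) ≃ {σ : NC n // σ ≤ t} where
  toFun f := ⟨⟨glue t.1 fun B => (f B).1, t.2.glue fun B => (f B).2⟩, glue_le⟩
  invFun σ B := ⟨σ.1.1.comap (enum B.1), σ.1.2.comap _⟩
  left_inv _ := funext fun B => Subtype.ext (comap_glue B)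
  right_inv σ := Subtype.ext (Subtype.ext (glue_comap σ.2))

end Glue

section Blockwise

open Equiv

variable {n : ℕ} {t : Setoid (Fin n)}

def ActsBlockwise (t : Setoid (Fin n)) (τ : Perm (Fin n))
    (q : ∀ B : blocks t, Perm (Fin B.1.card)) : Prop :=
  ∀ B : blocks t, ∀ i, τ (enum B.1 i) = enum B.1 (q B i)

namespace ActsBlockwise

variable {τ τ' : Perm (Fin n)} {q q' : ∀ B : blocks t, Perm (Fin B.1.card)}

lemma mul (h : ActsBlockwise t τ q) (h' : ActsBlockwise t τ' q') :
    ActsBlockwise t (τ * τ') (fun B => q B * q' B) := by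
  intro B i
  rw [Perm.mul_apply, Perm.mul_apply, h' B i, h B]

lemma inv (h : ActsBlockwise t τ q) : ActsBlockwise t τ⁻¹ (fun B => (q B)⁻¹) := by
  intro B i
  rw [Perm.inv_eq_iff_eq, h B]
  simp

lemma pow (h : ActsBlockwise t τ q) (p : ℕ) : ActsBlockwise t (τ ^ p) (fun B => q B ^ p) := by
  induction p with
  | zero => intro B i; rfl
  | succ p ih => simpa only [pow_succ] using ih.mul h

lemma sameCycle_enum_iff (h : ActsBlockwise t τ q) (B : blocks t) (i j : Fin B.1.card) :
    τ.SameCycle (enum B.1 i) (enum B.1 j) ↔ (q B).SameCycle i j := by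
  constructor
  · intro hc
    obtain ⟨p, -, hp⟩ := hc.exists_pow_eq'
    rw [h.pow p B i] at hp
    exact ⟨p, by rw [zpow_natCast]; exact (enum B.1).injective hp⟩
  · intro hc
    obtain ⟨p, -, hp⟩ := hc.exists_pow_eq'
    exact ⟨p, by rw [zpow_natCast, h.pow p B i, hp]⟩

lemma cycleSetoid_eq (h : ActsBlockwise t τ q) :
    cycleSetoid τ = glue t (fun B => cycleSetoid (q B)) := by
  ext x y
  obtain ⟨B, i, rfl⟩ := exists_enum_eq t x
  change τ.SameCycle _ y ↔ _
  constructor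
  · intro hc
    obtain ⟨p, -, rfl⟩ := hc.exists_pow_eq'
    rw [h.pow p B i] at hc ⊢
    exact (glue_rel_enum B i _).mpr ((h.sameCycle_enum_iff B i _).mp hc)
  · intro hg
    obtain ⟨j, rfl⟩ := exists_enum_eq_of_glue_rel B i hg
    exact (h.sameCycle_enum_iff B i j).mpr ((glue_rel_enum B i j).mp hg)

end ActsBlockwise

lemma actsBlockwise_permOf_glue (t : Setoid (Fin n)) (g : ∀ B : blocks t, Setoid (Fin B.1.card)) :
    ActsBlockwise t (permOf (glue t g)) (fun B => permOf (g B)) := by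
  intro B i
  rw [permOf_apply, permOf_apply, nextFun_orderEmbedding _ _ (blockOf_glue B i)]

lemma actsBlockwise_permOf (t : Setoid (Fin n)) :
    ActsBlockwise t (permOf t) (fun B => permOf (topS B.1.card)) := by
  simpa only [glue_topS] using actsBlockwise_permOf_glue t (fun B => topS B.1.card)

lemma permOf_topS_apply {c : ℕ} (b : Fin c) (hb : b.val + 1 < c) :
    permOf (topS c) b = ⟨b.val + 1, hb⟩ := by
  rw [permOf_apply]
  have hlt : b < ⟨b.val + 1, hb⟩ := Fin.mk_lt_mk.mpr (Nat.lt_succ_self _)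
  obtain ⟨h₁, h₂⟩ := lt_nextFun_and_nextFun_le (s := topS c) trivial hlt
  exact le_antisymm h₂ (Fin.le_def.mpr h₁)

/-- `P_{1_c}` is the cyclic shift `b ↦ b + 1`, a single `c`-cycle. -/
lemma cycleSetoid_permOf_topS (c : ℕ) : cycleSetoid (permOf (topS c)) = topS c := by
  ext x y
  have hc : 0 < c := x.pos
  have pow_apply_zero : ∀ (v : ℕ) (hv : v < c), (permOf (topS c) ^ v) ⟨0, hc⟩ = ⟨v, hv⟩ := by
    intro v
    induction v with
    | zero => intro; rfl
    | succ v ih =>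
      intro hv
      rw [pow_succ', Perm.mul_apply, ih (Nat.lt_of_succ_lt hv), permOf_topS_apply]
  have sameCycle_zero : ∀ z : Fin c, (permOf (topS c)).SameCycle ⟨0, hc⟩ z :=
    fun z => ⟨z.val, by rw [zpow_natCast, pow_apply_zero z.val z.2]⟩
  exact ⟨fun _ => trivial, fun _ => (sameCycle_zero x).symm.trans (sameCycle_zero y)⟩

lemma cycleSetoid_permOf (s : Setoid (Fin n)) : cycleSetoid (permOf s) = s := by
  rw [(actsBlockwise_permOf s).cycleSetoid_eq,
    glue_congr fun B => cycleSetoid_permOf_topS B.1.card, glue_topS]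

lemma permOf_injective : Function.Injective (permOf (n := n)) := fun s s' h => by
  rw [← cycleSetoid_permOf s, ← cycleSetoid_permOf s', h]

lemma cycleSetoid_one : cycleSetoid (1 : Perm (Fin n)) = botS n :=
  Setoid.ext fun _ _ => Perm.sameCycle_one

lemma relKreweras_eq_botS_iff {s t : Setoid (Fin n)} : relKreweras s t = botS n ↔ s = t := by
  refine ⟨fun h => permOf_injective ?_,
    fun h => by rw [h, relKreweras, inv_mul_cancel, cycleSetoid_one]⟩
  rw [← inv_mul_eq_one]
  refine Equiv.ext fun x => ?_
  have hx : relKreweras s t x (((permOf s)⁻¹ * permOf t) x) := ⟨1, by rw [zpow_one]⟩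
  rw [h] at hx
  exact hx.symm

lemma relKreweras_glue (t : Setoid (Fin n)) (g : ∀ B : blocks t, Setoid (Fin B.1.card)) :
    relKreweras (glue t g) t = glue t (fun B => kreweras (g B)) :=
  ((actsBlockwise_permOf_glue t g).inv.mul (actsBlockwise_permOf t)).cycleSetoid_eq

end Blockwise

section Words

variable {n k : ℕ}

lemma sigma_subword_eq_of_strictMono (w : Fin n → Fin k) {C : Finset (Fin n)} {c : ℕ}
    (e : Fin c → Fin n) (he : StrictMono e) (hC : ∀ x, x ∈ C ↔ ∃ i, e i = x) :
    (⟨C.card, subword w C⟩ : WordIdx k) = ⟨c, w ∘ e⟩ := by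
  have hcard : C.card = c := by
    rw [show C = Finset.univ.image e by ext x; simp [hC],
      Finset.card_image_of_injective _ he.injective, Finset.card_univ, Fintype.card_fin]
  have henum : e ∘ Fin.cast hcard = enum C :=
    Finset.orderEmbOfFin_unique rfl (fun i => (hC _).mpr ⟨_, rfl⟩) (he.comp fun _ _ h => h)
  refine Sigma.ext hcard ((Fin.heq_fun_iff hcard).mpr fun i => ?_)
  change subword w C i = w (e _)
  rw [subword_apply, ← henum]
  rfl

lemma sigma_subword_image_enum (w : Fin n → Fin k) (B : Finset (Fin n)) (D : Finset (Fin B.card)) :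
    (⟨(D.image (enum B)).card, subword w (D.image (enum B))⟩ : WordIdx k) =
      ⟨D.card, subword (subword w B) D⟩ := by
  rw [sigma_subword_eq_of_strictMono w (enum B ∘ enum D)
    ((enum B).strictMono.comp (enum D).strictMono) fun x => ?_]
  · refine congrArg (Sigma.mk D.card) (funext fun i => ?_)
    rw [subword_apply, subword_apply]
    rfl
  · rw [Finset.mem_image]
    constructor
    · rintro ⟨a, ha, rfl⟩
      obtain ⟨i, rfl⟩ := exists_enum_eq_of_mem ha
      exact ⟨i, rfl⟩
    · rintro ⟨i, rfl⟩
      exact ⟨_, enum_mem D i, rfl⟩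

lemma sigma_subword_univ (w : Fin n → Fin k) :
    (⟨(Finset.univ : Finset (Fin n)).card, subword w Finset.univ⟩ : WordIdx k) = ⟨n, w⟩ :=
  sigma_subword_eq_of_strictMono w id strictMono_id fun x => by simp

end Words

section ProdBlocks

variable {n k : ℕ} {M : Type*} [CommMonoid M]

lemma blocks_glue (t : Setoid (Fin n)) (g : ∀ B : blocks t, Setoid (Fin B.1.card)) :
    blocks (glue t g) =
      Finset.univ.biUnion fun B : blocks t => (blocks (g B)).image (Finset.image (enum B.1)) := by
  ext C
  simp only [Finset.mem_biUnion, Finset.mem_univ, true_and, Finset.mem_image, mem_blocks]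
  constructor
  · rintro ⟨x, rfl⟩
    obtain ⟨B, i, rfl⟩ := exists_enum_eq t x
    exact ⟨B, _, ⟨i, rfl⟩, (blockOf_glue B i).symm⟩
  · rintro ⟨B, _, ⟨i, rfl⟩, rfl⟩
    exact ⟨_, blockOf_glue B i⟩

lemma prod_blocks_glue (φ : WordIdx k → M) (w : Fin n → Fin k) (t : Setoid (Fin n))
    (g : ∀ B : blocks t, Setoid (Fin B.1.card)) :
    ∏ C ∈ blocks (glue t g), φ ⟨C.card, subword w C⟩ =
      ∏ B : blocks t, ∏ D ∈ blocks (g B), φ ⟨D.card, subword (subword w B.1) D⟩ := by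
  have image_subset : ∀ (B : blocks t) (D : Finset (Fin B.1.card)), D.image (enum B.1) ⊆ B.1 :=
    fun B D => Finset.image_subset_iff.mpr fun i _ => enum_mem B.1 i
  rw [blocks_glue, Finset.prod_biUnion]
  · refine Finset.prod_congr rfl fun B _ => ?_
    rw [Finset.prod_image fun D _ D' _ h => Finset.image_injective (enum B.1).injective h]
    exact Finset.prod_congr rfl fun D _ => congrArg φ (sigma_subword_image_enum w B.1 D)
  · intro B _ B' _ hne
    simp only [Function.onFun, Finset.disjoint_left, Finset.mem_image]
    rintro _ ⟨D, hD, rfl⟩ ⟨D', -, hDD'⟩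
    obtain ⟨i, hi⟩ := nonempty_of_mem_blocks hD
    have hx : enum B.1 i ∈ D'.image (enum B'.1) := hDD' ▸ Finset.mem_image_of_mem _ hi
    exact hne (Subtype.ext (eq_of_mem_blocks B.2 B'.2 (enum_mem B.1 i) (image_subset B' D' hx)))

lemma Yprod_glue (w : Fin n → Fin k) (t : Setoid (Fin n))
    (g : ∀ B : blocks t, Setoid (Fin B.1.card)) :
    Yprod w (glue t g) = ∏ B : blocks t, Yprod (subword w B.1) (g B) :=
  prod_blocks_glue (fun p => Ygen p) w t g

lemma blocks_topS (hn : 0 < n) : blocks (topS n) = {Finset.univ} := by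
  ext C
  simp only [mem_blocks, Finset.mem_singleton]
  constructor
  · rintro ⟨x, rfl⟩
    exact Finset.eq_univ_of_forall fun _ => mem_blockOf.mpr trivial
  · rintro rfl
    exact ⟨⟨0, hn⟩, Finset.eq_univ_of_forall fun _ => mem_blockOf.mpr trivial⟩

lemma prod_blocks_topS (φ : WordIdx k → M) (hn : 0 < n) (w : Fin n → Fin k) :
    ∏ C ∈ blocks (topS n), φ ⟨C.card, subword w C⟩ = φ ⟨n, w⟩ := by
  rw [blocks_topS hn, Finset.prod_singleton, sigma_subword_univ]

lemma card_eq_one_of_mem_blocks_botS {B : Finset (Fin n)} (hB : B ∈ blocks (botS n)) :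
    B.card = 1 := by
  obtain ⟨x, rfl⟩ := mem_blocks.mp hB
  rw [Finset.card_eq_one]
  exact ⟨x, Finset.ext fun y => by simp [botS, eq_comm]⟩

instance : Subsingleton (NC 1) :=
  ⟨fun π π' => Subtype.ext (Setoid.ext fun x y => by
    rw [Subsingleton.elim x y]
    exact ⟨fun _ => π'.1.refl' y, fun _ => π.1.refl' y⟩)⟩

end ProdBlocks

section Hopf

variable {n k : ℕ}

lemma Ygen_of_two_le {p : WordIdx k} (h : 2 ≤ p.1) : Ygen p = MvPolynomial.X ⟨p, h⟩ := dif_pos h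

lemma Ygen_of_le_one {p : WordIdx k} (h : p.1 ≤ 1) : Ygen p = 1 := dif_neg (by omega)

lemma Yprod_of_le_one (hn : n ≤ 1) (w : Fin n → Fin k) (s : Setoid (Fin n)) : Yprod w s = 1 :=
  Finset.prod_eq_one fun B _ => Ygen_of_le_one ((Finset.card_le_univ B).trans (by simpa using hn))

lemma Yprod_botS (w : Fin n → Fin k) : Yprod w (botS n) = 1 :=
  Finset.prod_eq_one fun _ hB => Ygen_of_le_one (card_eq_one_of_mem_blocks_botS hB).le

lemma Yprod_topS (w : Fin n → Fin k) : Yprod w (topS n) = Ygen ⟨n, w⟩ := by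
  rcases Nat.eq_zero_or_pos n with rfl | hn
  · rw [Yprod_of_le_one zero_le_one, Ygen_of_le_one zero_le_one]
  · exact prod_blocks_topS (fun p => Ygen p) hn w

lemma Δk_Ygen {c : ℕ} (hc : 1 ≤ c) (u : Fin c → Fin k) :
    Δk k (Ygen ⟨c, u⟩) = ∑ π : NC c, Yprod u π.1 ⊗ₜ[ℂ] Yprod u (kreweras π.1) := by
  obtain hc | rfl := Nat.lt_or_eq_of_le hc
  · rw [Ygen_of_two_le (p := ⟨c, u⟩) hc, Δk, MvPolynomial.aeval_X]
  · rw [Fintype.sum_subsingleton _ (ncBot 1), Yprod_of_le_one le_rfl, Yprod_of_le_one le_rfl,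
      Ygen_of_le_one le_rfl, map_one, Algebra.TensorProduct.one_def]

lemma prod_tmul_prod {ι : Type*} (s : Finset ι) (f g : ι → Yalg k) :
    ∏ i ∈ s, f i ⊗ₜ[ℂ] g i = (∏ i ∈ s, f i) ⊗ₜ[ℂ] (∏ i ∈ s, g i) := by
  classical
  induction s using Finset.induction_on with
  | empty => simp [Algebra.TensorProduct.one_def]
  | insert _ _ hx ih =>
    rw [Finset.prod_insert hx, Finset.prod_insert hx, Finset.prod_insert hx, ih,
      Algebra.TensorProduct.tmul_mul_tmul]

lemma Δk_Yprod (w : Fin n → Fin k) (t : NC n) :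
    Δk k (Yprod w t.1) = ∑ σ ∈ Finset.univ.filter (· ≤ t),
      Yprod w σ.1 ⊗ₜ[ℂ] Yprod w (relKreweras σ.1 t.1) := by
  have hfactor : Δk k (Yprod w t.1) = ∏ B : blocks t.1, ∑ π : NC B.1.card,
      Yprod (subword w B.1) π.1 ⊗ₜ[ℂ] Yprod (subword w B.1) (kreweras π.1) := by
    rw [Yprod, map_prod, ← Finset.prod_coe_sort]
    exact Finset.prod_congr rfl fun B _ => Δk_Ygen (nonempty_of_mem_blocks B.2).card_pos _
  rw [hfactor, Fintype.prod_sum, Finset.sum_subtype (p := (· ≤ t)) _ (fun σ => by simp)]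
  refine Fintype.sum_equiv (glueEquiv t) _ _ fun f => ?_
  rw [prod_tmul_prod]
  change _ = Yprod w (glue t.1 fun B => (f B).1) ⊗ₜ[ℂ] Yprod w (relKreweras (glue t.1 _) t.1)
  rw [relKreweras_glue, Yprod_glue, Yprod_glue]

lemma εk_Yprod (w : Fin n → Fin k) (s : Setoid (Fin n)) :
    εk k (Yprod w s) = if s = botS n then 1 else 0 := by
  split_ifs with h
  · rw [h, Yprod_botS, map_one]
  · obtain ⟨x, y, hxy, hne⟩ : ∃ x y, s x y ∧ x ≠ y := by
      by_contra! hc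
      exact h (Setoid.ext fun x y => ⟨hc x y, fun hxy => (hxy : x = y) ▸ s.refl' x⟩)
    have hcard : 2 ≤ (blockOf s x).card :=
      Finset.one_lt_card.mpr ⟨x, mem_blockOf_self s x, y, mem_blockOf.mpr hxy, hne⟩
    rw [Yprod, map_prod]
    refine Finset.prod_eq_zero (blockOf_mem_blocks s x) ?_
    rw [Ygen_of_two_le hcard, εk, MvPolynomial.aeval_X]

lemma charOf_Yprod {α : Dist k} (hα : ∀ p : WordIdx k, p.1 = 1 → α p = 1)
    (w : Fin n → Fin k) (s : Setoid (Fin n)) : charOf α (Yprod w s) = cfPart α w s := by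
  rw [Yprod, map_prod, cfPart]
  refine Finset.prod_congr rfl fun B hB => ?_
  obtain h | h := Nat.lt_or_eq_of_le (nonempty_of_mem_blocks hB).card_pos
  · rw [Ygen_of_two_le (p := ⟨B.card, _⟩) h, charOf, MvPolynomial.aeval_X]
  · rw [Ygen_of_le_one h.ge, map_one, hα _ h.symm]

end Hopf

section Chains

variable {n : ℕ}

lemma strictMono_snoc_iff {α : Type*} [Preorder α] {ℓ : ℕ} {c : Fin (ℓ + 1) → α} {a : α} :
    StrictMono (Fin.snoc c a : Fin (ℓ + 2) → α) ↔ StrictMono c ∧ c (Fin.last ℓ) < a := by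
  simp only [Fin.strictMono_iff_lt_succ, Fin.forall_fin_succ' (n := ℓ), Fin.succ_castSucc,
    Fin.snoc_castSucc, Fin.succ_last, Fin.snoc_last]

def chains (n ℓ : ℕ) (ρ : NC n) : Finset (Fin (ℓ + 1) → NC n) :=
  Finset.univ.filter fun c => StrictMono c ∧ c 0 = ncBot n ∧ c (Fin.last ℓ) = ρ

variable {M : Type*} [AddCommMonoid M]

lemma sum_chains_zero (F : (Fin 1 → NC n) → M) (ρ : NC n) :
    ∑ c ∈ chains n 0 ρ, F c = if ρ = ncBot n then F (fun _ => ncBot n) else 0 := by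
  have : Subsingleton (Fin (0 + 1)) := inferInstanceAs (Subsingleton (Fin 1))
  have hmem : ∀ c, c ∈ chains n 0 ρ ↔ ρ = ncBot n ∧ c = fun _ => ncBot n := by
    intro c
    simp only [chains, Finset.mem_filter, Finset.mem_univ, true_and, Fin.last_zero]
    constructor
    · rintro ⟨-, h₀, hρ⟩
      exact ⟨hρ.symm.trans h₀, funext fun i => Subsingleton.elim i 0 ▸ h₀⟩
    · rintro ⟨hρ, rfl⟩
      exact ⟨Subsingleton.strictMono _, rfl, hρ.symm⟩
  split_ifs with hρ
  · rw [Finset.sum_eq_single_of_mem _ ((hmem _).mpr ⟨hρ, rfl⟩)]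
    exact fun c hc hne => absurd ((hmem c).mp hc).2 hne
  · exact Finset.sum_eq_zero fun c hc => absurd ((hmem c).mp hc).1 hρ

lemma apply_last_of_mem_chains {ℓ : ℕ} {c : Fin (ℓ + 1) → NC n} {ρ : NC n} (hc : c ∈ chains n ℓ ρ) :
    c (Fin.last ℓ) = ρ :=
  (Finset.mem_filter.mp hc).2.2.2

lemma snoc_mem_chains_iff {ℓ : ℕ} {c : Fin (ℓ + 1) → NC n} {σ : NC n} (ρ : NC n)
    (hσ : c (Fin.last ℓ) = σ) : Fin.snoc c ρ ∈ chains n (ℓ + 1) ρ ↔ σ < ρ ∧ c ∈ chains n ℓ σ := by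
  subst hσ
  have h₀ : (Fin.snoc c ρ : Fin (ℓ + 2) → NC n) 0 = c 0 := Fin.snoc_castSucc (i := 0) ..
  simp only [chains, Finset.mem_filter, Finset.mem_univ, true_and, strictMono_snoc_iff,
    Fin.snoc_last, h₀]
  tauto

lemma sum_chains_succ (ℓ : ℕ) (F : (Fin (ℓ + 2) → NC n) → M) (ρ : NC n) :
    ∑ c ∈ chains n (ℓ + 1) ρ, F c =
      ∑ σ ∈ Finset.univ.filter (· < ρ), ∑ c ∈ chains n ℓ σ, F (Fin.snoc c ρ) := by
  have snoc_init : ∀ c ∈ chains n (ℓ + 1) ρ, Fin.snoc (Fin.init c) ρ = c := fun c hc => by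
    rw [← apply_last_of_mem_chains hc, Fin.snoc_init_self]
  rw [Finset.sum_sigma']
  refine Finset.sum_nbij' (fun c => ⟨c (Fin.last ℓ).castSucc, Fin.init c⟩)
    (fun p => Fin.snoc p.2 ρ) (fun c hc => ?_) (fun p hp => ?_) snoc_init (fun p hp => ?_)
    (fun c hc => by rw [snoc_init c hc])
  · rw [← snoc_init c hc, snoc_mem_chains_iff ρ rfl] at hc
    exact Finset.mem_sigma.mpr ⟨Finset.mem_filter.mpr ⟨Finset.mem_univ _, hc.1⟩, hc.2⟩
  · simp only [Finset.mem_sigma, Finset.mem_filter, Finset.mem_univ, true_and] at hp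
    exact (snoc_mem_chains_iff ρ (apply_last_of_mem_chains hp.2)).mpr hp
  · simp only [Finset.mem_sigma] at hp
    simp only [Fin.snoc_castSucc, Fin.init_snoc, apply_last_of_mem_chains hp.2]

end Chains

section Convolution

variable {n k : ℕ}

lemma convF_apply_of_eq_sum {D : A →ₐ[ℂ] A ⊗[ℂ] A} (ξ η : A →ₗ[ℂ] ℂ) {x : A} {ι : Type*}
    (s : Finset ι) (a b : ι → A) (hx : D x = ∑ i ∈ s, a i ⊗ₜ[ℂ] b i) :
    convF D ξ η x = ∑ i ∈ s, ξ (a i) * η (b i) := by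
  simp only [convF, LinearMap.coe_comp, Function.comp_apply, AlgHom.toLinearMap_apply, hx,
    map_sum, TensorProduct.map_tmul, LinearMap.mul'_apply]

variable {α : Dist k}

lemma sub_apply_Yprod (hα : ∀ p : WordIdx k, p.1 = 1 → α p = 1) (w : Fin n → Fin k)
    (s : Setoid (Fin n)) :
    ((charOf α).toLinearMap - (εk k).toLinearMap) (Yprod w s) =
      if s = botS n then 0 else cfPart α w s := by
  rw [LinearMap.sub_apply, AlgHom.toLinearMap_apply, AlgHom.toLinearMap_apply, εk_Yprod,
    ← charOf_Yprod hα]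
  split_ifs with h
  · rw [h, Yprod_botS, map_one, sub_self]
  · rw [sub_zero]

lemma convPowF_Yprod (hα : ∀ p : WordIdx k, p.1 = 1 → α p = 1) (w : Fin n → Fin k) (ℓ : ℕ)
    (ρ : NC n) :
    convPowF (Δk k) (εk k).toLinearMap ((charOf α).toLinearMap - (εk k).toLinearMap) ℓ
        (Yprod w ρ.1) =
      ∑ c ∈ chains n ℓ ρ, ∏ j : Fin ℓ, cfPart α w (relKreweras (c j.castSucc).1 (c j.succ).1) := by
  induction ℓ generalizing ρ with
  | zero =>
    rw [sum_chains_zero, Fin.prod_univ_zero]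
    exact (εk_Yprod w ρ.1).trans (if_congr ⟨fun h => Subtype.ext h, fun h => h ▸ rfl⟩ rfl rfl)
  | succ ℓ ih =>
    rw [convPowF, convF_apply_of_eq_sum _ _ _ _ _ (Δk_Yprod w ρ), sum_chains_succ,
      Finset.sum_filter, Finset.sum_filter]
    refine Finset.sum_congr rfl fun σ _ => ?_
    rw [sub_apply_Yprod hα w, relKreweras_eq_botS_iff, ← Subtype.ext_iff, ih]
    by_cases hσ : σ = ρ
    · simp [hσ]
    rw [if_neg hσ]
    split_ifs with hle hlt hlt
    · rw [Finset.sum_mul]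
      refine Finset.sum_congr rfl fun c hc => ?_
      rw [Fin.prod_univ_castSucc]
      simp only [Fin.succ_castSucc, Fin.snoc_castSucc, Fin.succ_last, Fin.snoc_last,
        apply_last_of_mem_chains hc]
    · exact absurd (lt_of_le_of_ne hle hσ) hlt
    · exact absurd hlt.le hle
    · rfl

end Convolution

section BlockCount

variable {n : ℕ} {s t : Setoid (Fin n)}

lemma biUnion_blockOf_of_le (h : s ≤ t) (x : Fin n) :
    (blockOf s x).biUnion (blockOf t) = blockOf t x := by
  ext z
  simp only [Finset.mem_biUnion, mem_blockOf]
  exact ⟨fun ⟨y, hxy, hyz⟩ => t.trans' (h hxy) hyz, fun hxz => ⟨x, s.refl' x, hxz⟩⟩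

lemma blocks_eq_image_biUnion (h : s ≤ t) :
    blocks t = (blocks s).image fun B => B.biUnion (blockOf t) := by
  simp only [blocks, Finset.image_image]
  exact Finset.image_congr fun x _ => (biUnion_blockOf_of_le h x).symm

lemma card_blocks_lt_of_lt (h : s < t) : (blocks t).card < (blocks s).card := by
  rw [blocks_eq_image_biUnion h.le]
  refine Finset.card_image_le.lt_of_ne fun hcard => h.not_ge fun x y hxy => ?_
  have hblock : blockOf s x = blockOf s y := by
    refine Finset.card_image_iff.mp hcard (blockOf_mem_blocks s x) (blockOf_mem_blocks s y) ?_
    simp only [biUnion_blockOf_of_le h.le, blockOf_eq_of_rel hxy]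
  exact mem_blockOf.mp (hblock ▸ mem_blockOf_self s y)

lemma card_blocks_botS : (blocks (botS n)).card = n := by
  rw [blocks, Finset.card_image_of_injective _ fun x y hxy => ?_, Finset.card_univ,
    Fintype.card_fin]
  have hx : x ∈ blockOf (botS n) y := by
    rw [show blockOf (botS n) y = blockOf (botS n) x from hxy.symm]
    exact mem_blockOf_self _ x
  exact (mem_blockOf.mp hx : y = x).symm

lemma blocks_nonempty (hn : 0 < n) (s : Setoid (Fin n)) : (blocks s).Nonempty :=
  ⟨_, blockOf_mem_blocks s ⟨0, hn⟩⟩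

lemma card_blocks_add_le_of_mem_chains {ℓ : ℕ} {c : Fin (ℓ + 1) → NC n} {ρ : NC n}
    (hc : c ∈ chains n ℓ ρ) (j : Fin (ℓ + 1)) : (blocks (c j).1).card + j ≤ n := by
  obtain ⟨hmono, h₀, -⟩ := (Finset.mem_filter.mp hc).2
  induction j using Fin.induction with
  | zero => rw [h₀, Fin.val_zero, add_zero]; exact card_blocks_botS.le
  | succ j ih =>
    have := card_blocks_lt_of_lt (hmono (Fin.castSucc_lt_succ (i := j)))
    rw [Fin.val_castSucc] at ih
    rw [Fin.val_succ]
    omega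

lemma length_lt_of_mem_chains_ncTop {ℓ : ℕ} {c : Fin (ℓ + 1) → NC n}
    (hc : c ∈ chains n ℓ (ncTop n)) (hℓ : 0 < ℓ) : ℓ < n := by
  have h := card_blocks_add_le_of_mem_chains hc (Fin.last ℓ)
  rw [apply_last_of_mem_chains hc, Fin.val_last] at h
  rcases Nat.eq_zero_or_pos n with rfl | hn
  · omega
  · have := (blocks_nonempty hn (ncTop n).1).card_pos
    omega

end BlockCount

lemma IsRTransform.apply_eq_one {k : ℕ} {μ α : Dist k} (hα : IsRTransform μ α) (hμ : InG μ)
    (p : WordIdx k) (hp : p.1 = 1) : α p = 1 := by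
  obtain ⟨c, u⟩ := p
  obtain rfl : c = 1 := hp
  rw [← hμ.2 u, hα.2 1 u le_rfl, Fintype.sum_subsingleton _ (ncTop 1)]
  exact (prod_blocks_topS (fun p => α p) one_pos u).symm

theorem convolution_power_chains_general (k n : ℕ) (μ α : Dist k)
    (hμ : InG μ) (hα : IsRTransform μ α) (w : Fin n → Fin k) (m : ℕ) :
    (m + 1 < n →
      convPowF (Δk k) (εk k).toLinearMap
          ((charOf α).toLinearMap - (εk k).toLinearMap) (m + 1) (Ygen ⟨n, w⟩) =
        ∑ c ∈ Finset.univ.filter (fun c : Fin (m + 2) → NC n =>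
            StrictMono c ∧ c 0 = ncBot n ∧ c (Fin.last (m + 1)) = ncTop n),
          cfChain α w m (fun i => (c i).1)) ∧
    (n ≤ m + 1 →
      convPowF (Δk k) (εk k).toLinearMap
          ((charOf α).toLinearMap - (εk k).toLinearMap) (m + 1) (Ygen ⟨n, w⟩) = 0) := by
  have hconv := convPowF_Yprod (hα.apply_eq_one hμ) w (m + 1) (ncTop n)
  rw [ncTop, Yprod_topS] at hconv
  refine ⟨fun _ => hconv, fun hnm => hconv.trans (Finset.sum_eq_zero fun c hc => ?_)⟩
  exact absurd (length_lt_of_mem_chains_ncTop hc m.succ_pos) (not_lt.mpr hnm)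

/-- Lemma 4.4.  For `μ ∈ G_k`, `|w| = n ≥ 2` and `ℓ = m + 1 ≥ 1`:
if `ℓ < n` then `(χ_μ - ε)^ℓ(Y_w) = ∑_{Γ chain in NC(n), |Γ| = ℓ} Cf_w^(Γ)(R_μ)`,
and if `ℓ ≥ n` then `(χ_μ - ε)^ℓ(Y_w) = 0`. -/
theorem convolution_power_chains (k n : ℕ) (hk : 1 ≤ k) (hn : 2 ≤ n) (μ α : Dist k)
    (hμ : InG μ) (hα : IsRTransform μ α) (w : Fin n → Fin k) (m : ℕ) :
    (m + 1 < n →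
      convPowF (Δk k) (εk k).toLinearMap
          ((charOf α).toLinearMap - (εk k).toLinearMap) (m + 1) (Ygen ⟨n, w⟩) =
        ∑ c ∈ Finset.univ.filter (fun c : Fin (m + 2) → NC n =>
            StrictMono c ∧ c 0 = ncBot n ∧ c (Fin.last (m + 1)) = ncTop n),
          cfChain α w m (fun i => (c i).1)) ∧
    (n ≤ m + 1 →
      convPowF (Δk k) (εk k).toLinearMap
          ((charOf α).toLinearMap - (εk k).toLinearMap) (m + 1) (Ygen ⟨n, w⟩) = 0) :=
  convolution_power_chains_general k n μ α hμ hα w m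

end FreeProb

end
end
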